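/- Let X be a real n×p matrix, β₀ ∈ ℝᵖ, and let η be a random vector in ℝⁿ with E[η_i] = 0 for all i. Let y = Xβ₀ + η and β̂gf(t) = (XᵀX)⁺(I − exp(−tΣ̂))Xᵀy with Σ̂ = XᵀX/n. Then for every t ≥ 0, E[β̂gf(t)] − β₀ = −exp(−tΣ̂) β₀; consequently the squared bias of gradient flow at time t equals ‖exp(−tΣ̂) β₀‖₂². -/

import Mathlib

open Matrix Filter MeasureTheory

/-- The Moore–Penrose pseudoinverse of a real matrix, defined via the standard limit
characterization `A⁺ = lim_{δ → 0⁺} (AᵀA + δ I)⁻¹ Aᵀ`. -/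
noncomputable def moorePenrose {m n : ℕ} (A : Matrix (Fin m) (Fin n) ℝ) :
    Matrix (Fin n) (Fin m) ℝ :=
  limUnder (nhdsWithin (0 : ℝ) (Set.Ioi 0)) fun δ => (Aᵀ * A + δ • (1 : Matrix (Fin n) (Fin n) ℝ))⁻¹ * Aᵀ

/-- The gradient flow estimator `β̂gf(t) = (XᵀX)⁺ (I − exp(−t Σ̂)) Xᵀ y`, `Σ̂ = XᵀX/n`. -/
noncomputable def betaGF {n p : ℕ} (X : Matrix (Fin n) (Fin p) ℝ) (y : Fin n → ℝ)
    (t : ℝ) : Fin p → ℝ :=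
  (moorePenrose (Xᵀ * X) *
      ((1 : Matrix (Fin p) (Fin p) ℝ) - NormedSpace.exp (-(t • ((n : ℝ)⁻¹ • (Xᵀ * X))))) *
      Xᵀ) *ᵥ y

/-!
Everything is computed in the continuous functional calculus of the symmetric matrix
`A = XᵀX`. The regularised inverses `(AᵀA + δ)⁻¹Aᵀ` are `cfc (x ↦ x / (x² + δ)) A`, and as
`δ → 0⁺` these converge pointwise on the (finite) spectrum to `x ↦ x⁻¹`, where `0⁻¹ = 0` is
exactly the right value at the zero eigenvalue; so `A⁺ = cfc (·⁻¹) A`. Since `f x = 1 - e^{cx}`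
vanishes at `0`, `x⁻¹ f(x) x = f(x)` on the spectrum, whence `A⁺ (I - e^{cA}) A = I - e^{cA}`.
The estimator is linear in `y = Xβ₀ + η`, so taking expectations kills the noise and leaves
`E[β̂gf(t)] = A⁺ (I - e^{-tΣ̂}) XᵀX β₀ = (I - e^{-tΣ̂}) β₀`.
-/

open Topology

theorem Set.Finite.tendstoUniformlyOn {α ι β : Type*} [PseudoMetricSpace β]
    {l : Filter ι} {F : ι → α → β} {f : α → β} {s : Set α} (hs : s.Finite)
    (h : ∀ x ∈ s, Tendsto (F · x) l (𝓝 (f x))) : TendstoUniformlyOn F f l s :=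
  Metric.tendstoUniformlyOn_iff.2 fun ε hε => (eventually_all_finite hs).2 fun x hx => by
    simpa only [dist_comm] using Metric.tendsto_nhds.1 (h x hx) ε hε

theorem tendsto_div_sq_add_nhdsGT_zero (x : ℝ) :
    Tendsto (fun δ => x / (x ^ 2 + δ)) (𝓝[>] 0) (𝓝 x⁻¹) := by
  rcases eq_or_ne x 0 with rfl | hx
  · simp
  · have hcont : ContinuousAt (fun δ => x / (x ^ 2 + δ)) 0 := by
      fun_prop (disch := simpa using hx)
    simpa [sq, ← div_div, div_self hx] using hcont.tendsto.mono_left nhdsWithin_le_nhds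

theorem integral_mulVec_add_apply {Ω ι κ : Type*} [MeasurableSpace Ω] {μ : Measure Ω}
    [IsProbabilityMeasure μ] [Fintype κ] {η : Ω → κ → ℝ}
    (hint : ∀ j, Integrable (fun ω => η ω j) μ) (hmean : ∀ j, ∫ ω, η ω j ∂μ = 0)
    (M : Matrix ι κ ℝ) (v : κ → ℝ) (i : ι) :
    ∫ ω, (M *ᵥ (v + η ω)) i ∂μ = (M *ᵥ v) i := by
  have hint' : ∀ j ∈ Finset.univ, Integrable (fun ω => M i j * η ω j) μ :=
    fun j _ => (hint j).const_mul _
  have hM : ∀ ω, (M *ᵥ η ω) i = ∑ j, M i j * η ω j := fun _ => rfl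
  simp only [mulVec_add, Pi.add_apply, hM]
  rw [integral_add (integrable_const _) (integrable_finsetSum _ hint'), integral_const,
    integral_finsetSum _ hint']
  simp [integral_const_mul, hmean]

namespace Matrix

variable {ι : Type*} [Fintype ι] [DecidableEq ι] {A : Matrix ι ι ℝ}

theorem continuousOn_real_spectrum (f : ℝ → ℝ) : ContinuousOn f (spectrum ℝ A) :=
  A.finite_real_spectrum.continuousOn f

theorem tendsto_cfc {X : Type*} {l : Filter X} {F : X → ℝ → ℝ} {f : ℝ → ℝ}
    (h : ∀ x ∈ spectrum ℝ A, Tendsto (F · x) l (𝓝 (f x))) :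
    Tendsto (fun x => cfc (F x) A) l (𝓝 (cfc f A)) :=
  tendsto_cfc_fun (A.finite_real_spectrum.tendstoUniformlyOn h)
    (.of_forall fun _ => continuousOn_real_spectrum _)

namespace IsHermitian

theorem mul_self_add_smul_one_eq_cfc (hA : A.IsHermitian) (δ : ℝ) :
    A * A + δ • 1 = cfc (fun x => x ^ 2 + δ) A := by
  rw [cfc_add A (· ^ 2) (fun _ => δ) (continuousOn_real_spectrum _)
    (continuousOn_real_spectrum _), cfc_pow_id A 2 hA.isSelfAdjoint,
    cfc_const δ A hA.isSelfAdjoint, Algebra.algebraMap_eq_smul_one, sq]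

theorem transpose_mul_self_add_smul_one_inv_mul_transpose_eq_cfc (hA : A.IsHermitian) {δ : ℝ}
    (hδ : 0 < δ) : (Aᵀ * A + δ • 1)⁻¹ * Aᵀ = cfc (fun x => x / (x ^ 2 + δ)) A := by
  have hAT : Aᵀ = A := by simpa [conjTranspose_eq_transpose_of_trivial] using hA.eq
  have hne : ∀ x ∈ spectrum ℝ A, x ^ 2 + δ ≠ 0 := fun x _ => by positivity
  rw [hAT, hA.mul_self_add_smul_one_eq_cfc, nonsing_inv_eq_ringInverse,
    ← cfc_inv _ _ hne (continuousOn_real_spectrum _) hA.isSelfAdjoint]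
  nth_rw 2 [← cfc_id' ℝ A hA.isSelfAdjoint]
  rw [← cfc_mul _ _ A (continuousOn_real_spectrum _) (continuousOn_real_spectrum _)]
  simp only [div_eq_inv_mul]

theorem moorePenrose_eq_cfc_inv {p : ℕ} {A : Matrix (Fin p) (Fin p) ℝ} (hA : A.IsHermitian) :
    moorePenrose A = cfc (·⁻¹ : ℝ → ℝ) A := by
  refine Tendsto.limUnder_eq ?_
  refine (tendsto_cfc fun x _ => tendsto_div_sq_add_nhdsGT_zero x).congr' ?_
  filter_upwards [self_mem_nhdsWithin] with δ hδ
  exact (hA.transpose_mul_self_add_smul_one_inv_mul_transpose_eq_cfc hδ).symm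

theorem moorePenrose_mul_cfc_mul_self {p : ℕ} {A : Matrix (Fin p) (Fin p) ℝ} (hA : A.IsHermitian)
    {f : ℝ → ℝ} (hf : f 0 = 0) : moorePenrose A * cfc f A * A = cfc f A := by
  rw [hA.moorePenrose_eq_cfc_inv]
  nth_rw 3 [← cfc_id' ℝ A hA.isSelfAdjoint]
  rw [← cfc_mul _ _ A (continuousOn_real_spectrum _) (continuousOn_real_spectrum _),
    ← cfc_mul _ _ A (continuousOn_real_spectrum _) (continuousOn_real_spectrum _)]
  refine cfc_congr fun x _ => ?_
  rcases eq_or_ne x 0 with rfl | hx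
  · simp [hf]
  · field_simp

-- The matrix type has no global norm; the `ℓ∞` operator norm induces its product topology,
-- so the functional calculus of Hermitian matrices serves the normed structure as well.
theorem exp_eq_cfc (hA : A.IsHermitian) : NormedSpace.exp A = cfc Real.exp A := by
  let _ : NormedRing (Matrix ι ι ℝ) := Matrix.linftyOpNormedRing
  let _ : NormedAlgebra ℝ (Matrix ι ι ℝ) := Matrix.linftyOpNormedAlgebra
  exact (@CFC.real_exp_eq_normedSpace_exp _ _ _ _ instContinuousFunctionalCalculus _
    hA.isSelfAdjoint).symm

theorem exp_smul_eq_cfc (hA : A.IsHermitian) (c : ℝ) :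
    NormedSpace.exp (c • A) = cfc (fun x => Real.exp (c * x)) A := by
  rw [cfc_comp_const_mul c Real.exp A Real.continuous_exp.continuousOn hA.isSelfAdjoint,
    ((IsSelfAdjoint.all c).smul hA.isSelfAdjoint).isHermitian.exp_eq_cfc]

theorem moorePenrose_mul_one_sub_exp_smul_mul_self {p : ℕ} {A : Matrix (Fin p) (Fin p) ℝ}
    (hA : A.IsHermitian) (c : ℝ) :
    moorePenrose A * (1 - NormedSpace.exp (c • A)) * A = 1 - NormedSpace.exp (c • A) := by
  rw [hA.exp_smul_eq_cfc, ← cfc_const_one ℝ A hA.isSelfAdjoint,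
    ← cfc_sub _ _ A (continuousOn_real_spectrum _) (continuousOn_real_spectrum _)]
  exact hA.moorePenrose_mul_cfc_mul_self (by simp)

end IsHermitian

end Matrix

/-- in the model `y = Xβ₀ + η` with mean-zero noise `η`, for every `t ≥ 0`
the bias vector of gradient flow is `E[β̂gf(t)] − β₀ = −exp(−tΣ̂) β₀`; consequently the
squared bias at time `t` is `‖exp(−tΣ̂) β₀‖₂²`. -/
theorem stmt_19 {Ω : Type*} [MeasurableSpace Ω] (μ : Measure Ω) [IsProbabilityMeasure μ]
    {n p : ℕ} (X : Matrix (Fin n) (Fin p) ℝ) (β₀ : Fin p → ℝ)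
    (η : Ω → Fin n → ℝ)
    (hint : ∀ i, Integrable (fun ω => η ω i) μ)
    (hmean : ∀ i, ∫ ω, η ω i ∂μ = 0)
    (y : Ω → Fin n → ℝ) (hy : ∀ ω, y ω = X *ᵥ β₀ + η ω) :
    ∀ t : ℝ, 0 ≤ t →
      (fun i => ∫ ω, betaGF X (y ω) t i ∂μ) - β₀ =
          -(NormedSpace.exp (-(t • ((n : ℝ)⁻¹ • (Xᵀ * X)))) *ᵥ β₀) ∧
        ∑ i, ((∫ ω, betaGF X (y ω) t i ∂μ) - β₀ i) ^ 2 =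
          ∑ i, (NormedSpace.exp (-(t • ((n : ℝ)⁻¹ • (Xᵀ * X)))) *ᵥ β₀) i ^ 2 := by
  intro t _
  set E := NormedSpace.exp (-(t • ((n : ℝ)⁻¹ • (Xᵀ * X)))) with hE
  have hA : (Xᵀ * X).IsHermitian := by
    simpa [conjTranspose_eq_transpose_of_trivial] using isHermitian_conjTranspose_mul_self X
  have hcollapse : moorePenrose (Xᵀ * X) * (1 - E) * Xᵀ * X = 1 - E := by
    rw [Matrix.mul_assoc _ Xᵀ, hE, ← mul_smul, ← neg_smul]
    exact hA.moorePenrose_mul_one_sub_exp_smul_mul_self _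
  have hbias : (fun i => ∫ ω, betaGF X (y ω) t i ∂μ) - β₀ = -(E *ᵥ β₀) := by
    have hexpect : (fun i => ∫ ω, betaGF X (y ω) t i ∂μ) = (1 - E) *ᵥ β₀ := by
      ext i
      simp only [betaGF, ← hE, hy, integral_mulVec_add_apply hint hmean, mulVec_mulVec,
        hcollapse]
    rw [hexpect, sub_mulVec, one_mulVec]
    abel
  refine ⟨hbias, Finset.sum_congr rfl fun i _ => ?_⟩
  have hi := congrFun hbias i
  simp only [Pi.sub_apply, Pi.neg_apply] at hi
  rw [hi, neg_sq]
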